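/- arXiv:2101.02015 — 8 statements merged into one kernel-verified Lean document; each statement's English description precedes it below -/
import Mathlib

section
/- Let M be a nonnegative integer and F, G, X, λ real numbers with G > 0, X > 0, λ > 0 and G·X² > 3F. Set δ = −F/(G·X² + X·√(G²·X² − 3·F·G)) and x₀ = λ·(1+δ)·X. Then x₀ is a critical point of W (i.e. W′(x₀) = 0) and W has a local minimum at x₀; in particular the relative shift δ does not depend on λ. -/
/-!
Writing `s = √(G²X² − 3FG)`, the shift `δ` is the root of `3GX²δ² + 2GX²δ + F = 0` with
`GX(1 + 3δ) = s` (the formula for `δ` is the quadratic formula with the numerator rationalised).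
This quadratic is exactly the condition that `x₀ = λ(1+δ)X` is a double root of `W x − W x₀`,
so `W x = W x₀ + (x − x₀)² (λ^{2M} G (x − x₀) + λ^{2M+1} s)`, and the second factor is positive
at `x₀`.
-/

open Filter Topology

theorem hasDerivAt_zero_of_eq_add_sq_mul {f g : ℝ → ℝ} {x₀ : ℝ}
    (hf : ∀ x, f x = f x₀ + (x - x₀) ^ 2 * g x) (hg : DifferentiableAt ℝ g x₀) :
    HasDerivAt f 0 x₀ := by
  rw [show f = fun x => f x₀ + (x - x₀) ^ 2 * g x from funext hf]
  have hsq : HasDerivAt (fun x : ℝ => (x - x₀) ^ 2) (2 * (x₀ - x₀)) x₀ := by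
    simpa using ((hasDerivAt_id x₀).sub_const x₀).fun_pow 2
  simpa using (hsq.mul hg.hasDerivAt).const_add (f x₀)

theorem isLocalMin_of_eq_add_sq_mul {f g : ℝ → ℝ} {x₀ : ℝ}
    (hf : ∀ x, f x = f x₀ + (x - x₀) ^ 2 * g x) (hg : ∀ᶠ x in 𝓝 x₀, 0 ≤ g x) :
    IsLocalMin f x₀ := by
  filter_upwards [hg] with x hx
  rw [hf x]
  nlinarith [sq_nonneg (x - x₀)]

noncomputable def relShift (F G X : ℝ) : ℝ :=
  -F / (G * X ^ 2 + X * Real.sqrt (G ^ 2 * X ^ 2 - 3 * F * G))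

section relShift

variable {F G X : ℝ}

theorem mul_one_add_three_mul_relShift (hG : 0 < G) (hX : 0 < X) (hFG : 3 * F < G * X ^ 2) :
    G * X * (1 + 3 * relShift F G X) = Real.sqrt (G ^ 2 * X ^ 2 - 3 * F * G) := by
  set s := Real.sqrt (G ^ 2 * X ^ 2 - 3 * F * G)
  have hs2 : s ^ 2 = G ^ 2 * X ^ 2 - 3 * F * G := Real.sq_sqrt (by nlinarith)
  have hden : 0 < G * X ^ 2 + X * s := by positivity
  have hrat : relShift F G X = (X * s - G * X ^ 2) / (3 * G * X ^ 2) := by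
    rw [relShift, div_eq_div_iff hden.ne' (by positivity)]
    linear_combination -X ^ 2 * hs2
  rw [hrat]
  field_simp
  ring

theorem relShift_quadratic (hG : 0 < G) (hX : 0 < X) (hFG : 3 * F < G * X ^ 2) :
    3 * G * X ^ 2 * relShift F G X ^ 2 + 2 * G * X ^ 2 * relShift F G X + F = 0 := by
  have hs2 := Real.sq_sqrt (show 0 ≤ G ^ 2 * X ^ 2 - 3 * F * G by nlinarith)
  rw [← mul_one_add_three_mul_relShift hG hX hFG] at hs2
  have h3G : 3 * G ≠ 0 := by positivity
  refine (mul_eq_zero.mp ?_).resolve_left h3G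
  linear_combination hs2

end relShift

theorem mul_harmonic_eq_add_sq_mul {a lam F G X δ x₀ : ℝ}
    (hδ : 3 * G * X ^ 2 * δ ^ 2 + 2 * G * X ^ 2 * δ + F = 0) (hx₀ : x₀ = lam * (1 + δ) * X)
    (x : ℝ) :
    x * (a * lam ^ 2 * F + a * G * (x - lam * X) ^ 2) =
      x₀ * (a * lam ^ 2 * F + a * G * (x₀ - lam * X) ^ 2) +
        (x - x₀) ^ 2 * (a * G * (x - x₀) + a * lam * (G * X * (1 + 3 * δ))) := by
  subst hx₀
  linear_combination (a * lam ^ 2 * (x - lam * (1 + δ) * X)) * hδ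

/-- For the cubic `W x = x * V x`, where
`V x = λ^(2M+2)·F + λ^(2M)·G·(x − λX)²` is the harmonic approximation near the
minimum `λX`, the point `x₀ = λ·(1+δ)·X` with
`δ = −F/(G·X² + X·√(G²·X² − 3·F·G))` is a critical point of `W` and a local
minimum of `W`; the relative shift `δ` does not depend on `λ`. -/
theorem stmt0 (M : ℕ) (F G X lam : ℝ) (hG : 0 < G) (hX : 0 < X) (hlam : 0 < lam)
    (hFG : 3 * F < G * X ^ 2)
    (V W : ℝ → ℝ)
    (hV : ∀ x, V x = lam ^ (2 * M + 2) * F + lam ^ (2 * M) * G * (x - lam * X) ^ 2)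
    (hW : ∀ x, W x = x * V x)
    (δ x₀ : ℝ)
    (hδ : δ = -F / (G * X ^ 2 + X * Real.sqrt (G ^ 2 * X ^ 2 - 3 * F * G)))
    (hx₀ : x₀ = lam * (1 + δ) * X) :
    deriv W x₀ = 0 ∧ IsLocalMin W x₀ := by
  obtain rfl : δ = relShift F G X := hδ
  set a := lam ^ (2 * M)
  set g : ℝ → ℝ := fun x => a * G * (x - x₀) + a * lam * (G * X * (1 + 3 * relShift F G X))
  have hexpand : ∀ x, W x = W x₀ + (x - x₀) ^ 2 * g x := by
    intro x
    simp only [hW, hV, pow_add, pow_two lam, ← mul_assoc]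
    convert mul_harmonic_eq_add_sq_mul (a := a) (relShift_quadratic hG hX hFG) hx₀ x using 1 <;>
      ring
  have hg₀ : 0 < g x₀ := by
    have hs : 0 < Real.sqrt (G ^ 2 * X ^ 2 - 3 * F * G) := Real.sqrt_pos.mpr (by nlinarith)
    simp only [g, sub_self, mul_zero, zero_add, mul_one_add_three_mul_relShift hG hX hFG]
    positivity
  have hg : Continuous g := by fun_prop
  refine ⟨(hasDerivAt_zero_of_eq_add_sq_mul hexpand (by fun_prop)).deriv,
    isLocalMin_of_eq_add_sq_mul hexpand ?_⟩
  filter_upwards [hg.continuousAt.eventually (eventually_gt_nhds hg₀)] with x hx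
  exact hx.le
end

section
/- Suppose α > 0 and β > 0. Then the set of critical points of the butterfly potential V is exactly {0, α, −α, √(α² + β²), −√(α² + β²)}; moreover V has a local minimum at 0, local maxima at α and −α, and local minima at √(α² + β²) and −√(α² + β²). -/
/-!
`V(x) = P(x²)` with `P(u) = u³ + a u² + c u`, and with the given couplings
`P'(u) = 3 (u - α²) (u - (α² + β²))`, so `V'(x) = 2x P'(x²)` vanishes exactly at `0`, `±α`,
`±√(α² + β²)`. At a critical point `u₀` of `P` the cubic factors as
`P(u) - P(u₀) = (u - u₀)² (u + 2u₀ + a)`, so near `t = ±√u₀` the sign of `V - V(t)` is the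
sign of `3t² + a`: `-3β²/2` at `±α`, `3β²/2` at `±√(α² + β²)`. At `0`,
`V(x) - V(0) = x² (x⁴ + a x² + c)` with `c > 0`.
-/

theorem isLocalMin_of_sub_eq_nonneg_mul {X : Type*} [TopologicalSpace X] {f q h : X → ℝ}
    {t : X} (hq : ∀ x, 0 ≤ q x) (hh : ContinuousAt h t) (ht : 0 < h t)
    (hf : ∀ x, f x - f t = q x * h x) : IsLocalMin f t := by
  filter_upwards [continuousAt_const.eventually_lt hh ht] with x hx
  nlinarith [hf x, hq x]

theorem isLocalMax_of_sub_eq_nonneg_mul {X : Type*} [TopologicalSpace X] {f q h : X → ℝ}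
    {t : X} (hq : ∀ x, 0 ≤ q x) (hh : ContinuousAt h t) (ht : h t < 0)
    (hf : ∀ x, f x - f t = q x * h x) : IsLocalMax f t := by
  filter_upwards [hh.eventually_lt continuousAt_const ht] with x hx
  nlinarith [hf x, hq x]

def butterfly (a c x : ℝ) : ℝ := x ^ 6 + a * x ^ 4 + c * x ^ 2

namespace butterfly

variable {a c : ℝ}

theorem hasDerivAt (x : ℝ) :
    HasDerivAt (butterfly a c) (2 * x * (3 * x ^ 4 + 2 * a * x ^ 2 + c)) x := by
  have h := ((hasDerivAt_pow 6 x).add ((hasDerivAt_pow 4 x).const_mul a)).add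
    ((hasDerivAt_pow 2 x).const_mul c)
  exact h.congr_deriv (by push_cast; ring)

theorem deriv_eq (x : ℝ) :
    deriv (butterfly a c) x = 2 * x * (3 * x ^ 4 + 2 * a * x ^ 2 + c) :=
  (hasDerivAt x).deriv

theorem sub_butterfly_zero (x : ℝ) :
    butterfly a c x - butterfly a c 0 = x ^ 2 * (x ^ 4 + a * x ^ 2 + c) := by
  unfold butterfly; ring

theorem sub_butterfly_of_critical {t : ℝ} (ht : 3 * t ^ 4 + 2 * a * t ^ 2 + c = 0) (x : ℝ) :
    butterfly a c x - butterfly a c t = (x ^ 2 - t ^ 2) ^ 2 * (x ^ 2 + 2 * t ^ 2 + a) := by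
  unfold butterfly
  linear_combination (x ^ 2 - t ^ 2) * ht

theorem isLocalMin_zero (hc : 0 < c) : IsLocalMin (butterfly a c) 0 :=
  isLocalMin_of_sub_eq_nonneg_mul sq_nonneg (by fun_prop) (by simpa using hc)
    sub_butterfly_zero

theorem isLocalMin_of_critical {t : ℝ} (ht : 3 * t ^ 4 + 2 * a * t ^ 2 + c = 0)
    (hpos : 0 < 3 * t ^ 2 + a) : IsLocalMin (butterfly a c) t :=
  isLocalMin_of_sub_eq_nonneg_mul (fun x ↦ sq_nonneg _) (by fun_prop) (by linarith)
    (sub_butterfly_of_critical ht)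

theorem isLocalMax_of_critical {t : ℝ} (ht : 3 * t ^ 4 + 2 * a * t ^ 2 + c = 0)
    (hneg : 3 * t ^ 2 + a < 0) : IsLocalMax (butterfly a c) t :=
  isLocalMax_of_sub_eq_nonneg_mul (fun x ↦ sq_nonneg _) (by fun_prop) (by linarith)
    (sub_butterfly_of_critical ht)

end butterfly

/-- for `α > 0`, `β > 0` the critical points of the symmetric
butterfly potential are exactly `{0, α, −α, √(α²+β²), −√(α²+β²)}`; `V` has a
local minimum at `0`, local maxima at `±α`, and local minima at `±√(α²+β²)`. -/
theorem stmt6 (α β a c : ℝ) (hα : 0 < α) (hβ : 0 < β)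
    (ha : a = -3 * α ^ 2 - (3 / 2) * β ^ 2)
    (hc : c = 3 * α ^ 2 * (α ^ 2 + β ^ 2))
    (V : ℝ → ℝ) (hV : ∀ x, V x = x ^ 6 + a * x ^ 4 + c * x ^ 2) :
    {x : ℝ | deriv V x = 0} =
      ({0, α, -α, Real.sqrt (α ^ 2 + β ^ 2), -Real.sqrt (α ^ 2 + β ^ 2)} : Set ℝ) ∧
    IsLocalMin V 0 ∧
    IsLocalMax V α ∧ IsLocalMax V (-α) ∧
    IsLocalMin V (Real.sqrt (α ^ 2 + β ^ 2)) ∧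
    IsLocalMin V (-Real.sqrt (α ^ 2 + β ^ 2)) := by
  obtain rfl : V = butterfly a c := funext hV
  set s := Real.sqrt (α ^ 2 + β ^ 2)
  have hs : s ^ 2 = α ^ 2 + β ^ 2 := Real.sq_sqrt (by positivity)
  have hcrit (t : ℝ) :
      3 * t ^ 4 + 2 * a * t ^ 2 + c = 3 * (t ^ 2 - α ^ 2) * (t ^ 2 - s ^ 2) := by
    rw [ha, hc, hs]; ring
  have hcrit_α (t : ℝ) (ht : t ^ 2 = α ^ 2) : 3 * t ^ 4 + 2 * a * t ^ 2 + c = 0 := by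
    rw [hcrit, ht]; ring
  have hcrit_s (t : ℝ) (ht : t ^ 2 = s ^ 2) : 3 * t ^ 4 + 2 * a * t ^ 2 + c = 0 := by
    rw [hcrit, ht]; ring
  have hβ2 : 0 < β ^ 2 := by positivity
  refine ⟨?_, butterfly.isLocalMin_zero (by rw [hc]; positivity),
    butterfly.isLocalMax_of_critical (hcrit_α _ rfl) (by rw [ha]; linarith),
    butterfly.isLocalMax_of_critical (hcrit_α _ (neg_sq α)) (by rw [neg_sq, ha]; linarith),
    butterfly.isLocalMin_of_critical (hcrit_s _ rfl) (by rw [hs, ha]; linarith),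
    butterfly.isLocalMin_of_critical (hcrit_s _ (neg_sq s)) (by rw [neg_sq, hs, ha]; linarith)⟩
  ext x
  simp only [Set.mem_ofPred_eq, butterfly.deriv_eq, hcrit, mul_eq_zero, sub_eq_zero,
    sq_eq_sq_iff_eq_or_eq_neg, Set.mem_insert_iff, Set.mem_singleton_iff,
    OfNat.ofNat_ne_zero, false_or, or_assoc]
end

section
/- Suppose α > 0 and β > 0. Then the off-central minimum value of the butterfly potential satisfies: V(√(α² + β²)) < 0 if and only if β² > 2α², and V(√(α² + β²)) = 0 if and only if β = √2·α. (Hence the ground-state relocalization catastrophe occurs, to leading order, along the line β = √2·α.) -/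
/-- for `α > 0`, `β > 0`, the off-central minimum value of the
symmetric butterfly potential satisfies `V(√(α²+β²)) < 0 ↔ β² > 2α²` and
`V(√(α²+β²)) = 0 ↔ β = √2·α`. -/
theorem stmt7 (α β a c : ℝ) (hα : 0 < α) (hβ : 0 < β)
    (ha : a = -3 * α ^ 2 - (3 / 2) * β ^ 2)
    (hc : c = 3 * α ^ 2 * (α ^ 2 + β ^ 2))
    (V : ℝ → ℝ) (hV : ∀ x, V x = x ^ 6 + a * x ^ 4 + c * x ^ 2) :
    (V (Real.sqrt (α ^ 2 + β ^ 2)) < 0 ↔ 2 * α ^ 2 < β ^ 2) ∧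
    (V (Real.sqrt (α ^ 2 + β ^ 2)) = 0 ↔ β = Real.sqrt 2 * α) := by
  have ht : (0:ℝ) < α ^ 2 + β ^ 2 := by positivity
  have hs : Real.sqrt (α ^ 2 + β ^ 2) ^ 2 = α ^ 2 + β ^ 2 := Real.sq_sqrt ht.le
  have h4 : Real.sqrt (α ^ 2 + β ^ 2) ^ 4 = (α ^ 2 + β ^ 2) ^ 2 := by
    rw [show (4:ℕ) = 2 * 2 from rfl, pow_mul, hs]
  have h6 : Real.sqrt (α ^ 2 + β ^ 2) ^ 6 = (α ^ 2 + β ^ 2) ^ 3 := by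
    rw [show (6:ℕ) = 2 * 3 from rfl, pow_mul, hs]
  have hv : V (Real.sqrt (α ^ 2 + β ^ 2)) =
      (α ^ 2 + β ^ 2) ^ 2 * (α ^ 2 - β ^ 2 / 2) := by
    rw [hV, h4, h6, hs, ha, hc]; ring
  have ht2 : (0:ℝ) < (α ^ 2 + β ^ 2) ^ 2 := by positivity
  constructor
  · rw [hv]
    constructor
    · intro h; nlinarith
    · intro h; nlinarith
  · rw [hv]
    constructor
    · intro h
      have hz : α ^ 2 - β ^ 2 / 2 = 0 := by
        rcases mul_eq_zero.mp h with h1 | h2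
        · exact absurd h1 ht2.ne'
        · exact h2
      have hb2 : β ^ 2 = 2 * α ^ 2 := by linarith
      calc β = Real.sqrt (β ^ 2) := (Real.sqrt_sq hβ.le).symm
        _ = Real.sqrt (2 * α ^ 2) := by rw [hb2]
        _ = Real.sqrt 2 * Real.sqrt (α ^ 2) := Real.sqrt_mul (by norm_num) _
        _ = Real.sqrt 2 * α := by rw [Real.sqrt_sq hα.le]
    · intro h
      have h2 : Real.sqrt 2 ^ 2 = 2 := Real.sq_sqrt (by norm_num)
      rw [h, mul_pow, h2]; ring
end

section
/- Suppose α > 0 and β > 0, and let x : ℝ → ℝ be differentiable at 0 with F(x(ε), ε) = 0 for all ε in some neighborhood of 0. If x(0) = √(α² + β²) or x(0) = −√(α² + β²) (an outer critical point of the unperturbed potential), then x′(0) = −1/(4β²). Here √ denotes the real square root. -/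
/-- if `x(ε)` is a branch of critical points of the asymmetric
butterfly potential, i.e. `F(x(ε), ε) = 0` near `ε = 0`, differentiable at `0`,
starting at an outer critical point `x(0) = ±√(α²+β²)`, then
`x′(0) = −1/(4β²)`. -/
theorem stmt10 (α β : ℝ) (hα : 0 < α) (hβ : 0 < β)
    (F : ℝ → ℝ → ℝ)
    (hF : ∀ x ε : ℝ, F x ε =
      6 * x * (x ^ 2 - α ^ 2) * (x ^ 2 - α ^ 2 - β ^ 2) + 3 * ε * x ^ 2)
    (x : ℝ → ℝ) (hx : DifferentiableAt ℝ x 0)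
    (hroot : ∀ᶠ ε in nhds (0 : ℝ), F (x ε) ε = 0)
    (h0 : x 0 = Real.sqrt (α ^ 2 + β ^ 2) ∨ x 0 = -Real.sqrt (α ^ 2 + β ^ 2)) :
    deriv x 0 = -(1 / (4 * β ^ 2)) := by
  have hxd : HasDerivAt x (deriv x 0) 0 := hx.hasDerivAt
  set d := deriv x 0 with hd
  have hnn : (0:ℝ) ≤ α ^ 2 + β ^ 2 := by positivity
  have hsq : (x 0) ^ 2 = α ^ 2 + β ^ 2 := by
    rcases h0 with h | h <;> rw [h] <;>
      simp [neg_pow, Real.sq_sqrt hnn]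
  have hx2 : HasDerivAt (fun ε => (x ε) ^ 2) (2 * (x 0) ^ 1 * d) 0 := hxd.pow 2
  have hg : HasDerivAt (fun ε => 6 * x ε * ((x ε)^2 - α^2) * ((x ε)^2 - α^2 - β^2)
      + 3 * ε * (x ε)^2)
      (((6 * d * ((x 0)^2 - α^2) + 6 * (x 0) * (2 * (x 0) ^ 1 * d)) * ((x 0)^2 - α^2 - β^2)
        + (6 * (x 0) * ((x 0)^2 - α^2)) * (2 * (x 0) ^ 1 * d))
       + (3 * 1 * (x 0) ^ 2 + (3 * 0) * (2 * (x 0) ^ 1 * d))) 0 :=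
    (((hxd.const_mul 6).mul ((hx2).sub_const (α^2))).mul
        (((hx2).sub_const (α^2)).sub_const (β^2))).add
      (((hasDerivAt_id (0:ℝ)).const_mul 3).mul hx2)
  have heq : (fun ε => 6 * x ε * ((x ε)^2 - α^2) * ((x ε)^2 - α^2 - β^2)
      + 3 * ε * (x ε)^2) =ᶠ[nhds (0:ℝ)] fun _ => (0:ℝ) := by
    filter_upwards [hroot] with ε hε
    rw [hF] at hε
    exact hε
  have hzero : ((6 * d * ((x 0)^2 - α^2) + 6 * (x 0) * (2 * (x 0) ^ 1 * d)) * ((x 0)^2 - α^2 - β^2)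
        + (6 * (x 0) * ((x 0)^2 - α^2)) * (2 * (x 0) ^ 1 * d))
       + (3 * 1 * (x 0) ^ 2 + (3 * 0) * (2 * (x 0) ^ 1 * d)) = 0 := by
    have h1 := hg.deriv
    rw [heq.deriv_eq] at h1
    simpa using h1.symm
  have hkey : 12 * (α^2 + β^2) * β^2 * d + 3 * (α^2 + β^2) = 0 := by
    linear_combination hzero -
      (30 * d * (x 0)^2 + 12 * d * (α^2 + β^2) - 18 * d * α^2 + 3) * hsq
  have hA : (0:ℝ) < 3 * (α^2 + β^2) := by positivity
  have h4 : 4 * β^2 * d = -1 := by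
    have h5 : 3 * (α^2 + β^2) * (4 * β^2 * d) = 3 * (α^2 + β^2) * (-1) := by
      linear_combination hkey
    exact mul_left_cancel₀ (ne_of_gt hA) h5
  have hβ2 : β ^ 2 ≠ 0 := by positivity
  field_simp
  linarith [h4]
end

section
/- Suppose α > 0 and β > 0, and let x : ℝ → ℝ be twice continuously differentiable on a neighborhood of 0 with x(0) = α and F(x(ε), ε) = 0 for all ε in that neighborhood. Then x″(0) = (β² + 4α²)/(16·α·β⁶); equivalently, the perturbed inner critical point admits the expansion x(ε) = α + ε/(4β²) + ε²·(β² + 4α²)/(32·α·β⁶) + o(ε²). -/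
/-!
Differentiating the identity `F (x ε) ε = 0` once and twice at `ε = 0` gives two linear
equations for `x'(0)` and `x''(0)` with the common coefficient `∂F/∂x (α, 0) = -12 α² β²`,
which is nonzero, so they determine `x'(0) = 1/(4β²)` and then `x''(0)`. The `o(ε²)`
expansion is Taylor's formula with Peano remainder, obtained from the mean value inequality
applied to the remainder, whose derivative is `o(ε)`.
-/

open Asymptotics Filter Topology

theorem isLittleO_sub_taylor_two {E : Type*} [NormedAddCommGroup E] [NormedSpace ℝ E]
    {f f' : ℝ → E} {a : ℝ} {c : E}
    (hf : ∀ᶠ t in 𝓝 a, HasDerivAt f (f' t) t) (hf' : HasDerivAt f' c a) :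
    (fun t => f t - (f a + (t - a) • f' a + ((t - a) ^ 2 / 2) • c)) =o[𝓝 a]
      fun t => (t - a) ^ 2 := by
  obtain ⟨r, hr, hball⟩ := Metric.eventually_nhds_iff_ball.mp hf
  have hs : 𝓝[Metric.ball a r] a = 𝓝 a :=
    Metric.isOpen_ball.nhdsWithin_eq (Metric.mem_ball_self hr)
  have key := (convex_ball a r).isLittleO_pow_succ_real (Metric.mem_ball_self hr) (n := 1)
    (f := fun t => f t - (f a + (t - a) • f' a + ((t - a) ^ 2 / 2) • c))
    (f' := fun t => f' t - f' a - (t - a) • c) ?_ ?_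
  · simpa [hs] using key
  · intro t ht
    have hp : HasDerivAt (fun t : ℝ => f a + (t - a) • f' a + ((t - a) ^ 2 / 2) • c)
        (f' a + (t - a) • c) t := by
      have := (((hasDerivAt_id t).sub_const a).smul_const (f' a)).const_add (f a) |>.add
        ((((hasDerivAt_id t).sub_const a).pow 2).div_const 2 |>.smul_const c)
      refine this.congr_deriv ?_
      simp only [id, one_smul, Nat.cast_ofNat]
      module
    exact ((hball t ht).sub hp).hasDerivWithinAt.congr_deriv (by abel)
  · simpa [hs] using hf'.isLittleO

theorem eventuallyEq_zero_of_hasDerivAt {E : Type*} [NormedAddCommGroup E] [NormedSpace ℝ E]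
    {g g' : ℝ → E} {a : ℝ} (hg : g =ᶠ[𝓝 a] 0)
    (hg' : ∀ᶠ t in 𝓝 a, HasDerivAt g (g' t) t) : g' =ᶠ[𝓝 a] 0 := by
  filter_upwards [hg.eventually_nhds, hg'] with t hzero hderiv
  exact hderiv.unique ((hasDerivAt_const t 0).congr_of_eventuallyEq hzero)

section Butterfly

variable (α β : ℝ)

def butterflyForce (x ε : ℝ) : ℝ :=
  6 * x * (x ^ 2 - α ^ 2) * (x ^ 2 - α ^ 2 - β ^ 2) + 3 * ε * x ^ 2

def butterflyForceDerivX (x ε : ℝ) : ℝ :=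
  30 * x ^ 4 - 18 * (2 * α ^ 2 + β ^ 2) * x ^ 2 + 6 * α ^ 2 * (α ^ 2 + β ^ 2) + 6 * ε * x

variable {α β}

theorem hasDerivAt_butterflyForce_comp {x : ℝ → ℝ} {v t : ℝ} (hx : HasDerivAt x v t) :
    HasDerivAt (fun ε => butterflyForce α β (x ε) ε)
      (butterflyForceDerivX α β (x t) t * v + 3 * x t ^ 2) t := by
  have hsq := (hx.pow 2).sub_const (α ^ 2)
  have := (((hx.const_mul 6).mul hsq).mul (hsq.sub_const (β ^ 2))).add
    (((hasDerivAt_id t).const_mul 3).mul (hx.pow 2))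
  refine this.congr_deriv ?_
  simp only [butterflyForceDerivX, id, Pi.mul_apply, Pi.pow_apply]
  push_cast
  ring

theorem hasDerivAt_butterflyForceDerivX_comp {x : ℝ → ℝ} {v t : ℝ} (hx : HasDerivAt x v t) :
    HasDerivAt (fun ε => butterflyForceDerivX α β (x ε) ε)
      ((120 * x t ^ 3 - 36 * (2 * α ^ 2 + β ^ 2) * x t + 6 * t) * v + 6 * x t) t := by
  have := ((((hx.pow 4).const_mul 30).sub
    ((hx.pow 2).const_mul (18 * (2 * α ^ 2 + β ^ 2)))).add_const
    (6 * α ^ 2 * (α ^ 2 + β ^ 2))).add (((hasDerivAt_id t).const_mul 6).mul hx)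
  refine this.congr_deriv ?_
  simp only [id]
  push_cast
  ring

theorem butterflyForceDerivX_self_zero :
    butterflyForceDerivX α β α 0 = -12 * α ^ 2 * β ^ 2 := by
  unfold butterflyForceDerivX
  ring

end Butterfly

/-- if `x(ε)` is a twice continuously differentiable branch of
critical points of the asymmetric butterfly potential with `x(0) = α`, then
`x″(0) = (β² + 4α²)/(16αβ⁶)`; equivalently
`x(ε) = α + ε/(4β²) + ε²·(β² + 4α²)/(32αβ⁶) + o(ε²)`. -/
theorem stmt11 (α β : ℝ) (hα : 0 < α) (hβ : 0 < β)
    (F : ℝ → ℝ → ℝ)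
    (hF : ∀ x ε : ℝ, F x ε =
      6 * x * (x ^ 2 - α ^ 2) * (x ^ 2 - α ^ 2 - β ^ 2) + 3 * ε * x ^ 2)
    (x : ℝ → ℝ) (U : Set ℝ) (hU : U ∈ nhds (0 : ℝ))
    (hx : ContDiffOn ℝ 2 x U) (hx0 : x 0 = α)
    (hroot : ∀ ε ∈ U, F (x ε) ε = 0) :
    deriv (deriv x) 0 = (β ^ 2 + 4 * α ^ 2) / (16 * α * β ^ 6) ∧
    (fun ε : ℝ => x ε -
        (α + ε / (4 * β ^ 2) + ε ^ 2 * (β ^ 2 + 4 * α ^ 2) / (32 * α * β ^ 6)))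
      =o[nhds 0] (fun ε : ℝ => ε ^ 2) := by
  have hx₂ : ContDiffAt ℝ 2 x 0 := hx.contDiffAt hU
  have hx' : ∀ᶠ t in 𝓝 0, HasDerivAt x (deriv x t) t :=
    (hx₂.eventually (by simp)).mono fun t ht => (ht.differentiableAt (by norm_num)).hasDerivAt
  have hx'' : HasDerivAt (deriv x) (deriv (deriv x) 0) 0 :=
    ((hx₂.derivWithin (m := 1) (by norm_num)).differentiableAt one_ne_zero).hasDerivAt
  have hforce : (fun ε => butterflyForce α β (x ε) ε) =ᶠ[𝓝 0] 0 := by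
    filter_upwards [hU] with ε hε
    exact (hF _ _).symm.trans (hroot ε hε)
  have hforceDeriv := eventuallyEq_zero_of_hasDerivAt hforce
    (hx'.mono fun t ht => hasDerivAt_butterflyForce_comp ht)
  have hc₁ : deriv x 0 = 1 / (4 * β ^ 2) := by
    have h₀ := hforceDeriv.eq_of_nhds
    rw [Pi.zero_apply, hx0, butterflyForceDerivX_self_zero] at h₀
    field_simp
    exact mul_left_cancel₀ (by positivity : 3 * α ^ 2 ≠ 0) (by linear_combination -h₀)
  have hc₂ : deriv (deriv x) 0 = (β ^ 2 + 4 * α ^ 2) / (16 * α * β ^ 6) := by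
    have hx'₀ : HasDerivAt x (deriv x 0) 0 := hx'.self_of_nhds
    have hd := ((hasDerivAt_butterflyForceDerivX_comp (α := α) (β := β) hx'₀).mul hx'').add
      ((hx'₀.pow 2).const_mul 3)
    have h₀ := hd.unique ((hasDerivAt_const 0 0).congr_of_eventuallyEq hforceDeriv)
    rw [hx0, butterflyForceDerivX_self_zero, hc₁] at h₀
    field_simp at h₀ ⊢
    exact mul_left_cancel₀ (by positivity : 12 * α ≠ 0)
      (by push_cast at h₀; linear_combination -h₀)
  refine ⟨hc₂, (isLittleO_sub_taylor_two hx' hx'').congr (fun t => ?_) (fun t => by simp)⟩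
  rw [sub_zero, smul_eq_mul, smul_eq_mul, hx0, hc₁, hc₂]
  ring
end

section
/- Suppose α > 0 and β > 0. Then the derivative at ε = 0 of the map ε ↦ V_ε(−√(α² + β²) − ε/(4β²)) equals −(α² + β²)^{3/2}; that is, the value of the perturbed potential at its shifted leftmost critical point satisfies V_ε(−√(α² + β²) − ε/(4β²)) = V₀(−√(α² + β²)) − ε·(α² + β²)^{3/2} + o(ε). Here √ denotes the real square root. -/
open Asymptotics

/-! The point `-√(α² + β²)` is a critical point of the unperturbed potential `V₀`, so moving it
along the shifted curve contributes nothing to first order; the derivative in `ε` is just the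
derivative of the perturbation term `ε x³` at the unperturbed point, namely `-(α² + β²)^(3/2)`. -/

theorem hasDerivAt_mul_of_continuousAt_zero {h : ℝ → ℝ} (hh : ContinuousAt h 0) :
    HasDerivAt (fun ε => ε * h ε) (h 0) 0 := by
  rw [hasDerivAt_iff_tendsto_slope]
  refine (hh.tendsto.mono_left nhdsWithin_le_nhds).congr' ?_
  filter_upwards [self_mem_nhdsWithin] with ε (hε : ε ≠ 0)
  rw [slope_def_field]
  field_simp
  ring

theorem hasDerivAt_add_mul_comp_of_hasDerivAt_zero {f g c : ℝ → ℝ} {c' : ℝ}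
    (hf : HasDerivAt f 0 (c 0)) (hg : ContinuousAt g (c 0)) (hc : HasDerivAt c c' 0) :
    HasDerivAt (fun ε => f (c ε) + ε * g (c ε)) (g (c 0)) 0 := by
  refine ((hf.comp 0 hc).add
    (hasDerivAt_mul_of_continuousAt_zero (hg.comp (f := c) hc.continuousAt))).congr_deriv ?_
  simp

theorem hasDerivAt_butterfly_neg_sqrt (α β : ℝ) :
    HasDerivAt (fun x : ℝ => x ^ 6 + (-3 * α ^ 2 - (3 / 2) * β ^ 2) * x ^ 4 +
      (3 * α ^ 2 * (α ^ 2 + β ^ 2)) * x ^ 2) 0 (-Real.sqrt (α ^ 2 + β ^ 2)) := by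
  set s := Real.sqrt (α ^ 2 + β ^ 2)
  have hs : s ^ 2 = α ^ 2 + β ^ 2 := Real.sq_sqrt (by positivity)
  refine (((hasDerivAt_pow 6 (-s)).add ((hasDerivAt_pow 4 (-s)).const_mul _)).add
    ((hasDerivAt_pow 2 (-s)).const_mul _)).congr_deriv ?_
  linear_combination (-6 * s ^ 3 + 6 * s * α ^ 2) * hs

theorem Real.sqrt_pow_three {t : ℝ} (ht : 0 ≤ t) : Real.sqrt t ^ 3 = t ^ ((3 : ℝ) / 2) := by
  rw [Real.rpow_div_two_eq_sqrt _ ht, ← Real.rpow_natCast]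
  norm_num

theorem stmt12_general (α β : ℝ)
    (V : ℝ → ℝ → ℝ)
    (hV : ∀ ε x : ℝ, V ε x = x ^ 6 + (-3 * α ^ 2 - (3 / 2) * β ^ 2) * x ^ 4 +
      ε * x ^ 3 + (3 * α ^ 2 * (α ^ 2 + β ^ 2)) * x ^ 2) :
    deriv (fun ε : ℝ => V ε (-Real.sqrt (α ^ 2 + β ^ 2) - ε / (4 * β ^ 2))) 0 =
      -((α ^ 2 + β ^ 2) ^ ((3 : ℝ) / 2)) ∧
    (fun ε : ℝ => V ε (-Real.sqrt (α ^ 2 + β ^ 2) - ε / (4 * β ^ 2)) -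
        (V 0 (-Real.sqrt (α ^ 2 + β ^ 2)) - ε * (α ^ 2 + β ^ 2) ^ ((3 : ℝ) / 2)))
      =o[nhds 0] (fun ε : ℝ => ε) := by
  set s := Real.sqrt (α ^ 2 + β ^ 2)
  have hcurve : HasDerivAt (fun ε : ℝ => -s - ε / (4 * β ^ 2)) (-(1 / (4 * β ^ 2))) 0 :=
    ((hasDerivAt_id 0).div_const _).const_sub (-s)
  have hderiv : HasDerivAt (fun ε => V ε (-s - ε / (4 * β ^ 2)))
      (-((α ^ 2 + β ^ 2) ^ ((3 : ℝ) / 2))) 0 := by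
    have h := hasDerivAt_add_mul_comp_of_hasDerivAt_zero
      (by simpa using hasDerivAt_butterfly_neg_sqrt α β) (continuous_pow 3).continuousAt hcurve
    convert h using 1
    · funext ε
      rw [hV]
      ring
    · rw [zero_div, sub_zero, ← Real.sqrt_pow_three (by positivity)]
      ring
  refine ⟨hderiv.deriv, (hasDerivAt_iff_isLittleO.mp hderiv).congr' ?_ ?_⟩
  · filter_upwards with ε
    simp only [sub_zero, zero_div, smul_eq_mul]
    ring
  · filter_upwards with ε
    simp

/-- the derivative at `ε = 0` of
`ε ↦ V_ε(−√(α²+β²) − ε/(4β²))` equals `−(α²+β²)^(3/2)`; that is,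
`V_ε(−√(α²+β²) − ε/(4β²)) = V₀(−√(α²+β²)) − ε·(α²+β²)^(3/2) + o(ε)`. -/
theorem stmt12 (α β : ℝ) (hα : 0 < α) (hβ : 0 < β)
    (V : ℝ → ℝ → ℝ)
    (hV : ∀ ε x : ℝ, V ε x = x ^ 6 + (-3 * α ^ 2 - (3 / 2) * β ^ 2) * x ^ 4 +
      ε * x ^ 3 + (3 * α ^ 2 * (α ^ 2 + β ^ 2)) * x ^ 2) :
    deriv (fun ε : ℝ => V ε (-Real.sqrt (α ^ 2 + β ^ 2) - ε / (4 * β ^ 2))) 0 =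
      -((α ^ 2 + β ^ 2) ^ ((3 : ℝ) / 2)) ∧
    (fun ε : ℝ => V ε (-Real.sqrt (α ^ 2 + β ^ 2) - ε / (4 * β ^ 2)) -
        (V 0 (-Real.sqrt (α ^ 2 + β ^ 2)) - ε * (α ^ 2 + β ^ 2) ^ ((3 : ℝ) / 2)))
      =o[nhds 0] (fun ε : ℝ => ε) :=
  stmt12_general α β V hV
end

section
/- Suppose α > 0 and β > 0, and let x : ℝ → ℝ be differentiable at 0 with x(0) = −√(α² + β²) and F(x(ε), ε) = 0 for all ε in some neighborhood of 0. Then the derivative at ε = 0 of the map ε ↦ V_ε″(x(ε)) equals 3·√(α² + β²)·(4α² + 5β²)/β², where V_ε″(x) = 30x⁴ + 12·a·x² + 6·ε·x + 2·c is the second x-derivative of V_ε and √ denotes the real square root. -/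
/-!
Write the branch equation as `P(x) + ε·Q(x) = 0` with `P(x) = 6x(x² − α²)(x² − α² − β²)` and
`Q(x) = 3x²`. Differentiating at `ε = 0` gives `P'(x₀)·x'(0) + Q(x₀) = 0`; since `x₀² = α² + β²`
kills the last factor of `P`, `P'(x₀) = 12x₀²β²` and hence `x'(0) = −1/(4β²)`. The chain rule then
gives `(V₀‴(x₀))·x'(0) + 6x₀` for the derivative of `ε ↦ V_ε″(x(ε))`, which evaluates to the claim.
-/

open Polynomial Filter Topology

section FirstOrderPerturbation

variable {𝕜 : Type*} [NontriviallyNormedField 𝕜] {x : 𝕜 → 𝕜} {d t : 𝕜}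

theorem Polynomial.hasDerivAt_eval_add_mul_eval (P Q : 𝕜[X]) (hx : HasDerivAt x d t) :
    HasDerivAt (fun ε => P.eval (x ε) + ε * Q.eval (x ε))
      ((P.derivative.eval (x t) + t * Q.derivative.eval (x t)) * d + Q.eval (x t)) t := by
  have hP := (P.hasDerivAt (x t)).comp t hx
  have hQ := (Q.hasDerivAt (x t)).comp t hx
  refine (hP.fun_add ((hasDerivAt_id' t).fun_mul hQ)).congr_deriv ?_
  simp only [Function.comp_apply]
  ring

theorem HasDerivAt.eq_zero_of_eventually_eq_zero {g : 𝕜 → 𝕜} {g' : 𝕜} (hg : HasDerivAt g g' t)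
    (hzero : ∀ᶠ ε in 𝓝 t, g ε = 0) : g' = 0 :=
  hg.unique ((hasDerivAt_const t 0).congr_of_eventuallyEq hzero)

theorem Polynomial.derivative_eval_mul_add_eval_eq_zero (P Q : 𝕜[X]) (hx : HasDerivAt x d 0)
    (hroot : ∀ᶠ ε in 𝓝 0, P.eval (x ε) + ε * Q.eval (x ε) = 0) :
    P.derivative.eval (x 0) * d + Q.eval (x 0) = 0 := by
  simpa using (P.hasDerivAt_eval_add_mul_eval Q hx).eq_zero_of_eventually_eq_zero hroot

end FirstOrderPerturbation

theorem butterfly_branch_deriv_eq {α β : ℝ} (hβ : β ≠ 0) {x : ℝ → ℝ} {d : ℝ}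
    (hx : HasDerivAt x d 0) (hx0 : x 0 ^ 2 = α ^ 2 + β ^ 2)
    (hroot : ∀ᶠ ε in 𝓝 0,
      6 * x ε * (x ε ^ 2 - α ^ 2) * (x ε ^ 2 - α ^ 2 - β ^ 2) + 3 * ε * x ε ^ 2 = 0) :
    d = -1 / (4 * β ^ 2) := by
  set P : ℝ[X] := 6 * X * (X ^ 2 - C (α ^ 2)) * (X ^ 2 - C (α ^ 2) - C (β ^ 2))
  have hP' : P.derivative.eval (x 0) = 12 * (α ^ 2 + β ^ 2) * β ^ 2 := by
    simp only [P, derivative_mul, derivative_ofNat, zero_mul, derivative_X, mul_one, zero_add,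
      derivative_sub, derivative_X_pow_succ, Nat.cast_one, map_add, map_one, pow_one, derivative_C,
      sub_zero, eval_add, eval_mul, eval_ofNat, eval_sub, eval_pow, eval_X, eval_C, eval_one]
    linear_combination (30 * x 0 ^ 2 - 6 * α ^ 2 + 12 * β ^ 2) * hx0
  have key := P.derivative_eval_mul_add_eval_eq_zero (C 3 * X ^ 2) hx <| hroot.mono fun ε h => by
    simp only [P, eval_mul, eval_sub, eval_pow, eval_X, eval_C, eval_ofNat]
    linear_combination h
  simp only [hP', eval_mul, eval_pow, eval_X, eval_C, hx0] at key
  have h4 : 4 * β ^ 2 * d + 1 = 0 := by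
    refine mul_left_cancel₀ (show 3 * (α ^ 2 + β ^ 2) ≠ 0 by positivity) ?_
    linear_combination key
  field_simp
  linear_combination h4

theorem stmt13_general (α β a c : ℝ) (hβ : 0 < β)
    (ha : a = -3 * α ^ 2 - (3 / 2) * β ^ 2)
    (F : ℝ → ℝ → ℝ)
    (hF : ∀ x ε : ℝ, F x ε =
      6 * x * (x ^ 2 - α ^ 2) * (x ^ 2 - α ^ 2 - β ^ 2) + 3 * ε * x ^ 2)
    (x : ℝ → ℝ) (hx : DifferentiableAt ℝ x 0)
    (hx0 : x 0 = -Real.sqrt (α ^ 2 + β ^ 2))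
    (hroot : ∀ᶠ ε in nhds (0 : ℝ), F (x ε) ε = 0) :
    deriv (fun ε : ℝ =>
        30 * (x ε) ^ 4 + 12 * a * (x ε) ^ 2 + 6 * ε * (x ε) + 2 * c) 0 =
      3 * Real.sqrt (α ^ 2 + β ^ 2) * (4 * α ^ 2 + 5 * β ^ 2) / β ^ 2 := by
  have hs : Real.sqrt (α ^ 2 + β ^ 2) ^ 2 = α ^ 2 + β ^ 2 := Real.sq_sqrt (by positivity)
  have hx0sq : x 0 ^ 2 = α ^ 2 + β ^ 2 := by rw [hx0, neg_sq, hs]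
  have hd : deriv x 0 = -1 / (4 * β ^ 2) :=
    butterfly_branch_deriv_eq hβ.ne' hx.hasDerivAt hx0sq (by simpa only [hF] using hroot)
  set P : ℝ[X] := 30 * X ^ 4 + C (12 * a) * X ^ 2 + C (2 * c)
  set Q : ℝ[X] := C 6 * X
  have hV : (fun ε => 30 * x ε ^ 4 + 12 * a * x ε ^ 2 + 6 * ε * x ε + 2 * c) =
      fun ε => P.eval (x ε) + ε * Q.eval (x ε) := by
    funext ε
    simp only [P, Q, eval_add, eval_mul, eval_pow, eval_X, eval_C, eval_ofNat]
    ring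
  have hP' : P.derivative.eval (x 0) = 120 * x 0 ^ 3 + 24 * a * x 0 := by
    simp only [P, derivative_mul, derivative_ofNat, zero_mul, derivative_X_pow_succ,
      Nat.cast_ofNat, map_add, map_one, zero_add, derivative_C, Nat.cast_one, pow_one, add_zero,
      eval_add, eval_mul, eval_ofNat, eval_C, eval_one, eval_pow, eval_X]
    ring
  rw [hV, (P.hasDerivAt_eval_add_mul_eval Q hx.hasDerivAt).deriv, hP', hd, hx0, ha]
  simp only [Q, zero_mul, add_zero, eval_mul, eval_C, eval_X]
  field_simp
  linear_combination 240 * hs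

/-- along a branch `x(ε)` of critical points of the asymmetric
butterfly potential with `x(0) = −√(α²+β²)`, the derivative at `ε = 0` of
`ε ↦ V_ε″(x(ε))`, where `V_ε″(x) = 30x⁴ + 12a·x² + 6εx + 2c`, equals
`3·√(α²+β²)·(4α² + 5β²)/β²`. -/
theorem stmt13 (α β a c : ℝ) (hα : 0 < α) (hβ : 0 < β)
    (ha : a = -3 * α ^ 2 - (3 / 2) * β ^ 2)
    (hc : c = 3 * α ^ 2 * (α ^ 2 + β ^ 2))
    (F : ℝ → ℝ → ℝ)
    (hF : ∀ x ε : ℝ, F x ε =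
      6 * x * (x ^ 2 - α ^ 2) * (x ^ 2 - α ^ 2 - β ^ 2) + 3 * ε * x ^ 2)
    (x : ℝ → ℝ) (hx : DifferentiableAt ℝ x 0)
    (hx0 : x 0 = -Real.sqrt (α ^ 2 + β ^ 2))
    (hroot : ∀ᶠ ε in nhds (0 : ℝ), F (x ε) ε = 0) :
    deriv (fun ε : ℝ =>
        30 * (x ε) ^ 4 + 12 * a * (x ε) ^ 2 + 6 * ε * (x ε) + 2 * c) 0 =
      3 * Real.sqrt (α ^ 2 + β ^ 2) * (4 * α ^ 2 + 5 * β ^ 2) / β ^ 2 :=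
  stmt13_general α β a c hβ ha F hF x hx hx0 hroot
end

section
/- For all real α, β, γ the outer critical point x = √(α² + β² + γ²) of the degree-8 symmetric Arnold potential satisfies V(√(α² + β² + γ²)) = −α⁸ − 2·α⁴·β²·γ² + (1/3)·β⁸ − (2/3)·β²·γ⁶ − (8/3)·α⁶·β² − (4/3)·α⁶·γ² − 2·α⁴·β⁴ + (2/3)·β⁶·γ² − (1/3)·γ⁸ and V″(√(α² + β² + γ²)) = 16·β⁴·γ² + 16·α²·β²·γ² + 32·β²·γ⁴ + 16·γ⁶ + 16·α²·γ⁴; moreover if γ > 0 then V″(√(α² + β² + γ²)) > 0 and V has a local minimum at √(α² + β² + γ²). Here √ denotes the real square root. -/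
/-!
Write `V x = P (x²)` with `P u = u⁴ + a u³ + c u² + f u`. The couplings are chosen so that
`P' u = 4 (u - α²)(u - α² - β²)(u - (α² + β² + γ²))`, so `x = √(α² + β² + γ²)` is a critical
point of `V`, and there `V'' x = 4 x² P''(x²) = 16 γ² (β² + γ²)(α² + β² + γ²)`, which is positive
for `γ > 0`; the second-derivative test then gives the local minimum.
-/

section EvenOctic

variable (a c f : ℝ)

theorem hasDerivAt_evenOctic (x : ℝ) :
    HasDerivAt (fun x => x ^ 8 + a * x ^ 6 + c * x ^ 4 + f * x ^ 2)
      (8 * x ^ 7 + 6 * a * x ^ 5 + 4 * c * x ^ 3 + 2 * f * x) x := by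
  refine ((((hasDerivAt_pow 8 x).add ((hasDerivAt_pow 6 x).const_mul a)).add
    ((hasDerivAt_pow 4 x).const_mul c)).add ((hasDerivAt_pow 2 x).const_mul f)).congr_deriv ?_
  norm_num
  ring

theorem hasDerivAt_deriv_evenOctic (x : ℝ) :
    HasDerivAt (fun x => 8 * x ^ 7 + 6 * a * x ^ 5 + 4 * c * x ^ 3 + 2 * f * x)
      (56 * x ^ 6 + 30 * a * x ^ 4 + 12 * c * x ^ 2 + 2 * f) x := by
  refine ((((hasDerivAt_pow 7 x).const_mul 8).add ((hasDerivAt_pow 5 x).const_mul (6 * a))).add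
    ((hasDerivAt_pow 3 x).const_mul (4 * c))).add ((hasDerivAt_id x).const_mul (2 * f))
    |>.congr_deriv ?_
  norm_num
  ring

theorem deriv_evenOctic :
    deriv (fun x : ℝ => x ^ 8 + a * x ^ 6 + c * x ^ 4 + f * x ^ 2) =
      fun x => 8 * x ^ 7 + 6 * a * x ^ 5 + 4 * c * x ^ 3 + 2 * f * x :=
  funext fun x => (hasDerivAt_evenOctic a c f x).deriv

theorem deriv_deriv_evenOctic :
    deriv (deriv fun x : ℝ => x ^ 8 + a * x ^ 6 + c * x ^ 4 + f * x ^ 2) =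
      fun x => 56 * x ^ 6 + 30 * a * x ^ 4 + 12 * c * x ^ 2 + 2 * f := by
  rw [deriv_evenOctic]
  exact funext fun x => (hasDerivAt_deriv_evenOctic a c f x).deriv

theorem evenOctic_of_sq_eq {x u : ℝ} (hx : x ^ 2 = u) :
    x ^ 8 + a * x ^ 6 + c * x ^ 4 + f * x ^ 2 = u ^ 4 + a * u ^ 3 + c * u ^ 2 + f * u := by
  subst hx
  ring

theorem deriv_evenOctic_of_sq_eq {x u : ℝ} (hx : x ^ 2 = u) :
    deriv (fun x : ℝ => x ^ 8 + a * x ^ 6 + c * x ^ 4 + f * x ^ 2) x =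
      2 * x * (4 * u ^ 3 + 3 * a * u ^ 2 + 2 * c * u + f) := by
  rw [deriv_evenOctic, ← hx]
  ring

theorem deriv_deriv_evenOctic_of_sq_eq {x u : ℝ} (hx : x ^ 2 = u) :
    deriv (deriv fun x : ℝ => x ^ 8 + a * x ^ 6 + c * x ^ 4 + f * x ^ 2) x =
      56 * u ^ 3 + 30 * a * u ^ 2 + 12 * c * u + 2 * f := by
  rw [deriv_deriv_evenOctic, ← hx]
  ring

end EvenOctic

theorem arnoldQuartic_deriv_eq {α β γ a c f : ℝ}
    (ha : a = -4 * α ^ 2 - (8 / 3) * β ^ 2 - (4 / 3) * γ ^ 2)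
    (hc : c = 6 * α ^ 4 + 8 * α ^ 2 * β ^ 2 + 4 * α ^ 2 * γ ^ 2 +
      2 * β ^ 4 + 2 * β ^ 2 * γ ^ 2)
    (hf : f = -4 * α ^ 6 - 8 * α ^ 4 * β ^ 2 - 4 * α ^ 4 * γ ^ 2 -
      4 * α ^ 2 * β ^ 4 - 4 * α ^ 2 * β ^ 2 * γ ^ 2) (u : ℝ) :
    4 * u ^ 3 + 3 * a * u ^ 2 + 2 * c * u + f =
      4 * (u - α ^ 2) * (u - α ^ 2 - β ^ 2) * (u - (α ^ 2 + β ^ 2 + γ ^ 2)) := by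
  subst ha hc hf
  ring

/-- at the outer critical point `x = √(α² + β² + γ²)` of the
symmetric degree-8 Arnold potential, the value and second derivative of `V`
take the stated closed forms; moreover if `γ > 0` then the second derivative
is positive and `V` has a local minimum there. -/
theorem stmt18 (α β γ a c f : ℝ)
    (ha : a = -4 * α ^ 2 - (8 / 3) * β ^ 2 - (4 / 3) * γ ^ 2)
    (hc : c = 6 * α ^ 4 + 8 * α ^ 2 * β ^ 2 + 4 * α ^ 2 * γ ^ 2 +
      2 * β ^ 4 + 2 * β ^ 2 * γ ^ 2)
    (hf : f = -4 * α ^ 6 - 8 * α ^ 4 * β ^ 2 - 4 * α ^ 4 * γ ^ 2 -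
      4 * α ^ 2 * β ^ 4 - 4 * α ^ 2 * β ^ 2 * γ ^ 2)
    (V : ℝ → ℝ)
    (hV : ∀ x, V x = x ^ 8 + a * x ^ 6 + c * x ^ 4 + f * x ^ 2) :
    V (Real.sqrt (α ^ 2 + β ^ 2 + γ ^ 2)) =
      -α ^ 8 - 2 * α ^ 4 * β ^ 2 * γ ^ 2 + (1 / 3) * β ^ 8 -
      (2 / 3) * β ^ 2 * γ ^ 6 - (8 / 3) * α ^ 6 * β ^ 2 -
      (4 / 3) * α ^ 6 * γ ^ 2 - 2 * α ^ 4 * β ^ 4 +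
      (2 / 3) * β ^ 6 * γ ^ 2 - (1 / 3) * γ ^ 8 ∧
    deriv (deriv V) (Real.sqrt (α ^ 2 + β ^ 2 + γ ^ 2)) =
      16 * β ^ 4 * γ ^ 2 + 16 * α ^ 2 * β ^ 2 * γ ^ 2 + 32 * β ^ 2 * γ ^ 4 +
      16 * γ ^ 6 + 16 * α ^ 2 * γ ^ 4 ∧
    (0 < γ → 0 < deriv (deriv V) (Real.sqrt (α ^ 2 + β ^ 2 + γ ^ 2)) ∧
      IsLocalMin V (Real.sqrt (α ^ 2 + β ^ 2 + γ ^ 2))) := by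
  have hV_eq : V = fun x => x ^ 8 + a * x ^ 6 + c * x ^ 4 + f * x ^ 2 := funext hV
  have hsq : Real.sqrt (α ^ 2 + β ^ 2 + γ ^ 2) ^ 2 = α ^ 2 + β ^ 2 + γ ^ 2 :=
    Real.sq_sqrt (by positivity)
  have hV'' : deriv (deriv V) (Real.sqrt (α ^ 2 + β ^ 2 + γ ^ 2)) =
      16 * γ ^ 2 * (β ^ 2 + γ ^ 2) * (α ^ 2 + β ^ 2 + γ ^ 2) := by
    rw [hV_eq, deriv_deriv_evenOctic_of_sq_eq a c f hsq, ha, hc, hf]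
    ring
  refine ⟨?_, by rw [hV'']; ring, fun hγ => ?_⟩
  · rw [hV, evenOctic_of_sq_eq a c f hsq, ha, hc, hf]
    ring
  have hpos : 0 < deriv (deriv V) (Real.sqrt (α ^ 2 + β ^ 2 + γ ^ 2)) := hV'' ▸ by positivity
  refine ⟨hpos, isLocalMin_of_deriv_deriv_pos hpos ?_ (hV_eq ▸ by fun_prop)⟩
  rw [hV_eq, deriv_evenOctic_of_sq_eq a c f hsq, arnoldQuartic_deriv_eq ha hc hf]
  ring
end
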